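/- arXiv:2107.10318 — 4 statements merged into one kernel-verified Lean document; each statement's English description precedes it below -/
import Mathlib

section
/- The number of 4-tuples (a_1, a_2, a_3, a_4) of positive integers summing to N = 4m with a_1 ≥ a_2 ≥ a_3 ≥ a_4 and a_1 ≥ a_2 + a_3 + a_4, multiplied by 4!, is asymptotic to (1/2)·C(N-1, 3) as m → ∞; that is, the discrete probability that no 4-gon can be formed from 4 ordered pieces tends to 1/2. Formally: lim_{N→∞} 24·p_4(N,4)/C(N-1,3) = 1/2, where p_4(N,4) counts such 4-tuples. -/
/-
A sorted quadruple with `a₁ + a₂ + a₃ ≤ a₀` and sum `N` is determined by its tail, a positive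
antitone triple with sum at most `M = N / 2`. Positive triples with sum at most `M` are counted by
stars and bars, `C(M, 3)`, and each is a rearrangement of an antitone one, so
`C(M, 3) ≤ 3! · #antitone ≤ C(M + 3, 3)`; hence `24 · p₄(N, 4) ~ 4 · (N / 2)³ / 6 = N³ / 12`,
half of `C(N - 1, 3) ~ N³ / 6`.
-/

open Finset Filter Asymptotics
open scoped Nat

section Sorting

variable {α : Type*} [LinearOrder α] {n : ℕ} {s : Finset (Fin n → α)}

theorem exists_antitone_comp_perm (f : Fin n → α) :
    ∃ σ : Equiv.Perm (Fin n), Antitone (f ∘ σ) :=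
  ⟨Tuple.sort (OrderDual.toDual ∘ f), Tuple.monotone_sort (OrderDual.toDual ∘ f)⟩

theorem card_le_factorial_mul_card_antitone
    (hs : ∀ f ∈ s, ∀ σ : Equiv.Perm (Fin n), f ∘ σ ∈ s) :
    #s ≤ n ! * #{f ∈ s | Antitone f} := by
  classical
  have hcover : s ⊆ univ.biUnion fun σ : Equiv.Perm (Fin n) =>
      {f ∈ s | Antitone f}.image (· ∘ σ) := by
    intro f hf
    obtain ⟨σ, hσ⟩ := exists_antitone_comp_perm f
    simp only [mem_biUnion, mem_univ, mem_image, mem_filter, true_and]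
    exact ⟨σ⁻¹, f ∘ σ, ⟨hs f hf σ, hσ⟩, by ext; simp⟩
  calc #s ≤ _ := card_le_card hcover
    _ ≤ #(univ : Finset (Equiv.Perm (Fin n))) * #{f ∈ s | Antitone f} :=
        card_biUnion_le_card_mul _ _ _ fun _ _ => card_image_le
    _ = n ! * #{f ∈ s | Antitone f} := by simp [Fintype.card_perm]

theorem factorial_mul_card_strictAnti_le
    (hs : ∀ f ∈ s, ∀ σ : Equiv.Perm (Fin n), f ∘ σ ∈ s) :
    n ! * #{f ∈ s | StrictAnti f} ≤ #s := by
  calc n ! * #{f ∈ s | StrictAnti f}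
      = #(univ ×ˢ {f ∈ s | StrictAnti f} : Finset (Equiv.Perm (Fin n) × _)) := by
        simp [Fintype.card_perm]
    _ ≤ #s := by
      refine card_le_card_of_injOn (fun p => p.2 ∘ p.1) ?_ ?_
      · rintro ⟨σ, f⟩ h
        simp only [coe_product, Set.mem_prod, mem_coe, mem_filter] at h
        exact hs f h.2.1 σ
      · rintro ⟨σ, f⟩ hf ⟨τ, g⟩ hg hfg
        simp only [coe_product, Set.mem_prod, mem_coe, mem_filter] at hf hg hfg
        have hf' : f = g ∘ ⇑(τ * σ⁻¹) := by
          ext i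
          simpa using congrFun hfg (σ⁻¹ i)
        have hfg' : f = g := by
          rw [hf']
          exact Tuple.unique_antitone (σ := τ * σ⁻¹) (τ := 1) (hf' ▸ hf.2.2.antitone)
            hg.2.2.antitone
        subst hfg'
        simp only [Prod.mk.injEq, and_true]
        ext i
        exact congrArg _ (hf.2.2.injective (congrFun hfg i))
end Sorting

def posTuples (n M : ℕ) : Finset (Fin n → ℕ) :=
  {f ∈ Fintype.piFinset fun _ => Icc 1 M | ∑ i, f i ≤ M}

theorem mem_posTuples {n M : ℕ} {f : Fin n → ℕ} :
    f ∈ posTuples n M ↔ (∀ i, 1 ≤ f i) ∧ ∑ i, f i ≤ M := by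
  simp only [posTuples, mem_filter, Fintype.mem_piFinset, mem_Icc]
  refine ⟨fun h => ⟨fun i => (h.1 i).1, h.2⟩, fun h => ⟨fun i => ⟨h.1 i, ?_⟩, h.2⟩⟩
  exact (single_le_sum (fun j _ => Nat.zero_le (f j)) (mem_univ i)).trans h.2

theorem sum_range_choose_eq_choose_succ (k M : ℕ) :
    ∑ j ∈ range M, j.choose k = M.choose (k + 1) := by
  induction M with
  | zero => simp
  | succ M ih => rw [sum_range_succ, ih, Nat.choose_succ_succ', add_comm]

theorem card_posTuples (n M : ℕ) : #(posTuples n M) = M.choose n := by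
  induction n generalizing M with
  | zero => simp [posTuples]
  | succ n ih =>
    have hfiber : ∀ j ∈ range M,
        #{f ∈ posTuples (n + 1) M | M - f 0 = j} = #(posTuples n j) := by
      intro j hj
      rw [mem_range] at hj
      refine card_nbij' Fin.tail (Fin.cons (α := fun _ => ℕ) (M - j)) ?_ ?_ ?_ ?_
      · intro f hf
        simp only [coe_filter, Set.mem_ofPred_eq, mem_posTuples, Fin.sum_univ_succ] at hf
        simp only [mem_coe, mem_posTuples, Fin.tail]
        exact ⟨fun i => hf.1.1 i.succ, by omega⟩
      · intro g hg
        simp only [mem_coe, mem_posTuples] at hg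
        simp only [coe_filter, Set.mem_ofPred_eq, mem_posTuples, Fin.sum_cons, Fin.forall_fin_succ,
          Fin.cons_zero, Fin.cons_succ]
        refine ⟨⟨⟨?_, hg.1⟩, ?_⟩, ?_⟩ <;> omega
      · intro f hf
        simp only [coe_filter, Set.mem_ofPred_eq, mem_posTuples, Fin.sum_univ_succ] at hf
        rw [show M - j = f 0 by omega, Fin.cons_self_tail]
      · intro g _
        exact Fin.tail_cons _ _
    rw [card_eq_sum_card_fiberwise (f := fun f => M - f 0) (t := range M), sum_congr rfl hfiber]
    · simp only [ih, sum_range_choose_eq_choose_succ]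
    · intro f hf
      rw [mem_coe, mem_posTuples] at hf
      have := hf.1 0
      rw [Fin.sum_univ_succ] at hf
      simp only [coe_range, Set.mem_Iio]
      omega

theorem sum_rev_eq_choose_two (n : ℕ) : ∑ i : Fin n, (i.rev : ℕ) = n.choose 2 := by
  rw [Fintype.sum_equiv Fin.revPerm (fun i : Fin n => (i.rev : ℕ)) (fun i => (i : ℕ))
      fun _ => rfl,
    Fin.sum_univ_eq_sum_range (fun i => i), sum_range_id, Nat.choose_two_right]

theorem comp_perm_mem_posTuples {n M : ℕ} {f : Fin n → ℕ} (hf : f ∈ posTuples n M)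
    (σ : Equiv.Perm (Fin n)) : f ∘ σ ∈ posTuples n M := by
  rw [mem_posTuples] at hf ⊢
  exact ⟨fun i => hf.1 (σ i), by simpa [Equiv.sum_comp σ f] using hf.2⟩

-- Adding `(n - 1, …, 1, 0)` makes an antitone tuple strictly antitone.
theorem card_antitone_le_card_strictAnti (n M : ℕ) :
    #{f ∈ posTuples n M | Antitone f} ≤
      #{f ∈ posTuples n (M + n.choose 2) | StrictAnti f} := by
  refine card_le_card_of_injOn (fun f i => f i + i.rev) ?_ ?_
  · intro f hf
    simp only [coe_filter, Set.mem_ofPred_eq, mem_posTuples] at hf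
    simp only [coe_filter, Set.mem_ofPred_eq, mem_posTuples, sum_add_distrib,
      sum_rev_eq_choose_two]
    refine ⟨⟨fun i => (hf.1.1 i).trans (Nat.le_add_right _ _), by omega⟩, ?_⟩
    exact hf.2.add_strictAnti (Fin.val_strictMono.comp_strictAnti Fin.rev_strictAnti)
  · intro f _ g _ hfg
    ext i
    simpa using congrFun hfg i

theorem choose_le_factorial_mul_card_antitone (n M : ℕ) :
    M.choose n ≤ n ! * #{f ∈ posTuples n M | Antitone f} :=
  card_posTuples n M ▸
    card_le_factorial_mul_card_antitone fun _ hf σ => comp_perm_mem_posTuples hf σ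

theorem factorial_mul_card_antitone_le (n M : ℕ) :
    n ! * #{f ∈ posTuples n M | Antitone f} ≤ (M + n.choose 2).choose n :=
  calc n ! * #{f ∈ posTuples n M | Antitone f}
      ≤ n ! * #{f ∈ posTuples n (M + n.choose 2) | StrictAnti f} :=
        Nat.mul_le_mul_left _ (card_antitone_le_card_strictAnti n M)
    _ ≤ (M + n.choose 2).choose n :=
        card_posTuples n _ ▸
          factorial_mul_card_strictAnti_le fun _ hf σ => comp_perm_mem_posTuples hf σ

theorem ncard_sorted_degenerate_quadruples_eq (N : ℕ) :
    {a : Fin 4 → ℕ | (∀ i, 1 ≤ a i) ∧ Antitone a ∧ ∑ i, a i = N ∧ a 1 + a 2 + a 3 ≤ a 0}.ncard =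
      #{f ∈ posTuples 3 (N / 2) | Antitone f} := by
  have himage : {a : Fin 4 → ℕ | (∀ i, 1 ≤ a i) ∧ Antitone a ∧ ∑ i, a i = N ∧
      a 1 + a 2 + a 3 ≤ a 0} =
      (fun f => Matrix.vecCons (N - ∑ i, f i) f) ''
        ↑({f ∈ posTuples 3 (N / 2) | Antitone f} : Finset (Fin 3 → ℕ)) := by
    ext a
    obtain ⟨x, f, rfl⟩ : ∃ x f, a = Matrix.vecCons x f :=
      ⟨a 0, Fin.tail a, (Fin.cons_self_tail a).symm⟩
    simp only [Set.mem_ofPred_eq, Set.mem_image, mem_coe, mem_filter, Matrix.vecCons_inj,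
      mem_posTuples, exists_eq_right_right, Fin.forall_fin_succ, antitone_vecCons,
      Fin.sum_univ_four, Fin.sum_univ_three, Matrix.cons_val_zero, Matrix.cons_val_succ,
      Matrix.cons_val_one, Matrix.cons_val_two, Matrix.cons_val_three, Matrix.vecHead,
      Matrix.vecTail, Function.comp_apply, IsEmpty.forall_iff, and_true, Fin.succ_zero_eq_one,
      Fin.succ_one_eq_two]
    constructor
    · rintro ⟨⟨-, hpos⟩, ⟨-, hf⟩, hsum, hquad⟩
      exact ⟨⟨⟨hpos, by omega⟩, hf⟩, by omega⟩
    · rintro ⟨⟨⟨hpos, hle⟩, hf⟩, rfl⟩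
      refine ⟨⟨by omega, hpos⟩, ⟨by omega, hf⟩, by omega, by omega⟩
  rw [himage, Set.ncard_image_of_injective _ fun f g h => by simpa using congrArg Fin.tail h,
    Set.ncard_coe_finset]

theorem Asymptotics.IsEquivalent.of_le_of_le {α : Type*} {l : Filter α} {t u v w : α → ℝ}
    (hv : v ~[l] t) (hw : w ~[l] t) (hvu : v ≤ᶠ[l] u) (huw : u ≤ᶠ[l] w)
    (ht : ∀ᶠ x in l, 0 < t x) : u ~[l] t := by
  rw [isEquivalent_iff_tendsto_one (ht.mono fun _ hx => hx.ne')] at hv hw ⊢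
  refine tendsto_of_tendsto_of_tendsto_of_le_of_le' hv hw ?_ ?_
  · filter_upwards [hvu, ht] with x hx htx using div_le_div_of_nonneg_right hx htx.le
  · filter_upwards [huw, ht] with x hx htx using div_le_div_of_nonneg_right hx htx.le

theorem isEquivalent_natCast_add (c : ℕ) :
    (fun n : ℕ => ((n + c : ℕ) : ℝ)) ~[atTop] fun n => (n : ℝ) := by
  push_cast
  exact IsEquivalent.refl.add_const_of_norm_tendsto_atTop
    (tendsto_norm_atTop_atTop.comp tendsto_natCast_atTop_atTop)

theorem isEquivalent_natCast_sub (c : ℕ) :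
    (fun n : ℕ => ((n - c : ℕ) : ℝ)) ~[atTop] fun n => (n : ℝ) := by
  refine (IsEquivalent.refl.add_const_of_norm_tendsto_atTop (c := -(c : ℝ))
    (tendsto_norm_atTop_atTop.comp tendsto_natCast_atTop_atTop)).congr_left ?_
  filter_upwards [eventually_ge_atTop c] with n hn
  push_cast [hn]
  ring

theorem isEquivalent_natCast_div {d : ℕ} (hd : 0 < d) :
    (fun n : ℕ => ((n / d : ℕ) : ℝ)) ~[atTop] fun n => (n : ℝ) / d := by
  refine isEquivalent_of_tendsto_one ?_
  have hlim : Tendsto (fun n : ℕ => (n : ℝ) / d) atTop atTop :=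
    tendsto_natCast_atTop_atTop.atTop_div_const (by exact_mod_cast hd)
  simpa [Function.comp_def, Nat.floor_div_eq_div, Pi.div_def] using
    tendsto_nat_floor_div_atTop.comp hlim

theorem isEquivalent_factorial_mul_card_antitone (n : ℕ) :
    (fun M : ℕ => (n ! * #{f ∈ posTuples n M | Antitone f} : ℝ)) ~[atTop]
      fun M => (M : ℝ) ^ n / n ! := by
  have hupper : (fun M : ℕ => ((M + n.choose 2).choose n : ℝ)) ~[atTop]
      fun M => (M : ℝ) ^ n / n ! :=
    ((isEquivalent_choose n).comp_tendsto (tendsto_add_atTop_nat _)).trans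
      (((isEquivalent_natCast_add _).pow n).div IsEquivalent.refl)
  refine (isEquivalent_choose n).of_le_of_le hupper ?_ ?_ ?_
  · exact Eventually.of_forall fun M => by
      dsimp only; exact_mod_cast choose_le_factorial_mul_card_antitone n M
  · exact Eventually.of_forall fun M => by
      dsimp only; exact_mod_cast factorial_mul_card_antitone_le n M
  · filter_upwards [eventually_gt_atTop 0] with M hM
    positivity

theorem prob_no_quadrilateral_four_pieces :
    Filter.Tendsto (fun N : ℕ =>
      (24 : ℝ) * (Set.ncard {a : Fin 4 → ℕ | (∀ i, 1 ≤ a i) ∧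
          (∀ i j : Fin 4, i ≤ j → a j ≤ a i) ∧ (∑ i, a i) = N ∧
          a 1 + a 2 + a 3 ≤ a 0} : ℕ) / (Nat.choose (N - 1) 3 : ℝ))
      Filter.atTop (nhds (1 / 2)) := by
  have hnum : (fun N : ℕ => 4 * (3 ! * #{f ∈ posTuples 3 (N / 2) | Antitone f} : ℝ)) ~[atTop]
      fun N => 4 * (((N : ℝ) / 2) ^ 3 / 3 !) :=
    IsEquivalent.refl.mul (((isEquivalent_factorial_mul_card_antitone 3).comp_tendsto
      (Nat.tendsto_div_const_atTop two_ne_zero)).trans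
      (((isEquivalent_natCast_div two_pos).pow 3).div IsEquivalent.refl))
  have hden : (fun N : ℕ => ((N - 1).choose 3 : ℝ)) ~[atTop] fun N => (N : ℝ) ^ 3 / 3 ! :=
    ((isEquivalent_choose 3).comp_tendsto (tendsto_sub_atTop_nat 1)).trans
      (((isEquivalent_natCast_sub 1).pow 3).div IsEquivalent.refl)
  have hlim : Tendsto (fun N : ℕ => 4 * (((N : ℝ) / 2) ^ 3 / 3 !) / ((N : ℝ) ^ 3 / 3 !)) atTop
      (nhds (1 / 2)) := by
    refine tendsto_const_nhds.congr' ?_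
    filter_upwards [eventually_ne_atTop 0] with N hN
    field_simp
    norm_num
  have hantitone (a : Fin 4 → ℕ) : (∀ i j : Fin 4, i ≤ j → a j ≤ a i) ↔ Antitone a := Iff.rfl
  simp only [hantitone, ncard_sorted_degenerate_quadruples_eq]
  refine ((hnum.div hden).symm.tendsto_nhds hlim).congr fun N => ?_
  rw [Pi.div_apply, Nat.factorial]
  push_cast
  ring
end

section
/- The number of partitions of N into summands restricted to a finite set S of r positive integers with gcd 1 is asymptotically N^{r-1}/(P·(r-1)!) as N → ∞, where P is the product of the elements of S. Formally, if p_S(N) denotes the number of functions c : S → ℕ with ∑_{s∈S} c(s)·s = N, then p_S(N)·P·(r-1)!/N^{r-1} → 1 as N → ∞. -/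
/-!
Let `F(m)` count the `c` with `∑ c s * s ≤ m`. Writing `b s = c s * s + e s` with `e s < s`
matches the vectors `b` with `∑ b s ≤ m` (there are `C(m + r, r)` of them, by stars and bars)
with the pairs `(c, e)`, up to a shift of `m` by `∑ s`; hence
`r! * (∏ s) * F(m) = m ^ r + O(m ^ (r - 1))`. Since `gcd S = 1`, every large `k` is a
nonnegative combination of `S`, and adding such a combination shows `p(n) ≤ p(n + k)`. A
sequence that is monotone in this weak sense and has partial sums
`m ^ r / (r! ∏ s) + O(m ^ (r - 1))` is asymptotic to their derivative
`m ^ (r - 1) / ((r - 1)! ∏ s)`: compare `p(N)` with its averages over windows next to `N`.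
-/

open Finset Filter Topology

lemma pow_succ_add_mul_sub_le {x y : ℝ} (hx : 0 ≤ x) (hy : 0 < y) (n : ℕ) :
    y ^ (n + 1) + (n + 1) * (x - y) * y ^ n ≤ x ^ (n + 1) := by
  have hb := one_add_mul_le_pow (a := x / y - 1) (by linarith [div_nonneg hx hy.le]) (n + 1)
  calc y ^ (n + 1) + (n + 1) * (x - y) * y ^ n
      = y ^ (n + 1) * (1 + ((n + 1 : ℕ) : ℝ) * (x / y - 1)) := by
        push_cast; field_simp; ring
    _ ≤ y ^ (n + 1) * (1 + (x / y - 1)) ^ (n + 1) := by gcongr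
    _ = x ^ (n + 1) := by rw [← mul_pow]; congr 1; field_simp; ring

lemma tendsto_natSqrt_atTop : Tendsto Nat.sqrt atTop atTop :=
  tendsto_atTop_atTop.2 fun b => ⟨b * b, fun _ h => Nat.le_sqrt.2 h⟩

lemma tendsto_natSqrt_div_atTop :
    Tendsto (fun N : ℕ => (Nat.sqrt N : ℝ) / N) atTop (𝓝 0) := by
  have hinv : Tendsto (fun N : ℕ => (Nat.sqrt N : ℝ)⁻¹) atTop (𝓝 0) :=
    tendsto_inv_atTop_zero.comp (tendsto_natCast_atTop_atTop.comp tendsto_natSqrt_atTop)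
  refine squeeze_zero' (Eventually.of_forall fun N => by positivity) ?_ hinv
  filter_upwards [tendsto_natSqrt_atTop.eventually_ge_atTop 1] with N hN
  have hsq : (Nat.sqrt N : ℝ) * Nat.sqrt N ≤ N := by exact_mod_cast Nat.sqrt_le N
  have hpos : (0 : ℝ) < Nat.sqrt N := by exact_mod_cast hN
  rw [div_le_iff₀ (by nlinarith), inv_mul_eq_div, le_div_iff₀ hpos]
  exact hsq

lemma eventually_natSqrt_add_le (K : ℕ) :
    ∀ᶠ N : ℕ in atTop, K + 2 ≤ Nat.sqrt N ∧ Nat.sqrt N + K ≤ N := by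
  filter_upwards [tendsto_natSqrt_atTop.eventually_ge_atTop (K + 2)] with N hN
  exact ⟨hN, by nlinarith [Nat.sqrt_le N]⟩

lemma tendsto_one_add_div_natSqrt_mul_pow (c d e : ℝ) (q : ℕ) :
    Tendsto (fun N : ℕ => (1 + c / Nat.sqrt N) * (1 + d / N + e * (Nat.sqrt N / N)) ^ q)
      atTop (𝓝 1) := by
  have h1 : Tendsto (fun N : ℕ => c / (Nat.sqrt N : ℝ)) atTop (𝓝 0) :=
    tendsto_const_nhds.div_atTop (tendsto_natCast_atTop_atTop.comp tendsto_natSqrt_atTop)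
  have h2 : Tendsto (fun N : ℕ => d / (N : ℝ)) atTop (𝓝 0) :=
    tendsto_const_nhds.div_atTop tendsto_natCast_atTop_atTop
  have h3 := (tendsto_const_nhds (x := e)).mul tendsto_natSqrt_div_atTop
  simpa using ((tendsto_const_nhds (x := (1 : ℝ)).add h1).mul
    (((tendsto_const_nhds (x := (1 : ℝ)).add h2).add h3).pow q))

section QuasiMonotone

variable {a : ℕ → ℝ} {K q : ℕ} {A : ℝ}

lemma mul_le_sum_window (hmono : ∀ n m, n + K ≤ m → a n ≤ a m) (N M : ℕ) :
    M * a N ≤ ∑ n ∈ Ico (N + K + 1) (N + K + M + 1), a n := by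
  have := card_nsmul_le_sum (Ico (N + K + 1) (N + K + M + 1)) a (a N)
    fun n hn => hmono _ _ (by rw [mem_Ico] at hn; omega)
  simpa using this

lemma sum_window_le_mul (hmono : ∀ n m, n + K ≤ m → a n ≤ a m) (L M : ℕ) :
    ∑ n ∈ Ico (L + 1) (L + M + 1), a n ≤ M * a (L + M + K) := by
  have := sum_le_card_nsmul (Ico (L + 1) (L + M + 1)) a (a (L + M + K))
    fun n hn => hmono _ _ (by rw [mem_Ico] at hn; omega)
  simpa using this

variable (hmono : ∀ n m, n + K ≤ m → a n ≤ a m) (hA : 0 < A)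
  (hlow : ∀ m : ℕ, (m : ℝ) ^ (q + 1) ≤ ∑ n ∈ range (m + 1), a n)
  (hup : ∀ m : ℕ, ∑ n ∈ range (m + 1), a n ≤ (m + A) ^ (q + 1))
include hmono hA hlow hup

lemma mul_le_of_sum_range_bounds (N M : ℕ) :
    M * a N ≤ (q + 1) * (M + A) * (N + K + M + A) ^ q := by
  have hsplit := sum_range_add_sum_Ico a (show N + K + 1 ≤ N + K + M + 1 by omega)
  have htan := pow_succ_add_mul_sub_le (x := N + K) (y := N + K + M + A) (by positivity)
    (by positivity) q
  calc M * a N ≤ ∑ n ∈ Ico (N + K + 1) (N + K + M + 1), a n := mul_le_sum_window hmono N M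
    _ = ∑ n ∈ range (N + K + M + 1), a n - ∑ n ∈ range (N + K + 1), a n := by
        rw [← hsplit]; ring
    _ ≤ (N + K + M + A) ^ (q + 1) - (N + K) ^ (q + 1) := by
        gcongr
        · exact_mod_cast hup (N + K + M)
        · exact_mod_cast hlow (N + K)
    _ ≤ (q + 1) * (M + A) * (N + K + M + A) ^ q := by linarith

lemma le_mul_of_sum_range_bounds (L M : ℕ) :
    (q + 1) * (M - A) * (L + A) ^ q ≤ M * a (L + M + K) := by
  have hsplit := sum_range_add_sum_Ico a (show L + 1 ≤ L + M + 1 by omega)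
  have htan := pow_succ_add_mul_sub_le (x := L + M) (y := L + A) (by positivity)
    (by positivity) q
  calc (q + 1) * (M - A) * (L + A) ^ q ≤ (L + M) ^ (q + 1) - (L + A) ^ (q + 1) := by linarith
    _ ≤ ∑ n ∈ range (L + M + 1), a n - ∑ n ∈ range (L + 1), a n := by
        gcongr
        · exact_mod_cast hlow (L + M)
        · exact_mod_cast hup L
    _ = ∑ n ∈ Ico (L + 1) (L + M + 1), a n := by rw [← hsplit]; ring
    _ ≤ M * a (L + M + K) := sum_window_le_mul hmono L M

lemma eventually_div_pow_le :
    ∀ᶠ N : ℕ in atTop, a N / (N : ℝ) ^ q ≤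
      (q + 1) * ((1 + A / Nat.sqrt N) * (1 + (K + A) / N + 1 * (Nat.sqrt N / N)) ^ q) := by
  filter_upwards [eventually_natSqrt_add_le K] with N ⟨hMK, hNM⟩
  set M := Nat.sqrt N
  have hM : (0 : ℝ) < M := by norm_cast; omega
  have hN : (0 : ℝ) < N := by norm_cast; omega
  have hwindow := mul_le_of_sum_range_bounds hmono hA hlow hup N M
  have e1 : 1 + (K + A) / N + 1 * (M / N) = (N + K + M + A) / N := by field_simp; ring
  have e2 : 1 + A / M = (M + A) / M := by field_simp
  rw [e1, e2, div_pow, div_le_iff₀ (by positivity)]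
  calc a N = M * a N / M := by field_simp
    _ ≤ (q + 1) * (M + A) * (N + K + M + A) ^ q / M := by gcongr
    _ = _ := by field_simp

lemma eventually_le_div_pow :
    ∀ᶠ N : ℕ in atTop,
      (q + 1) * ((1 + -A / Nat.sqrt N) * (1 + (A - K) / N + -1 * (Nat.sqrt N / N)) ^ q) ≤
        a N / (N : ℝ) ^ q := by
  filter_upwards [eventually_natSqrt_add_le K] with N ⟨hMK, hNM⟩
  set M := Nat.sqrt N
  have hM : (0 : ℝ) < M := by norm_cast; omega
  have hN : (0 : ℝ) < N := by norm_cast; omega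
  obtain ⟨L, hL⟩ : ∃ L, N = L + M + K := ⟨N - M - K, by omega⟩
  have hwindow := le_mul_of_sum_range_bounds hmono hA hlow hup L M
  rw [← hL] at hwindow
  have hLR : (L : ℝ) = N - M - K := by rw [hL]; push_cast; ring
  have e1 : 1 + (A - K) / N + -1 * (M / N) = (L + A) / N := by rw [hLR]; field_simp; ring
  have e2 : 1 + -A / M = (M - A) / M := by field_simp; ring
  rw [e1, e2, div_pow, le_div_iff₀ (by positivity)]
  calc (q + 1) * ((M - A) / M * ((L + A) ^ q / N ^ q)) * N ^ q
      = (q + 1) * (M - A) * (L + A) ^ q / M := by field_simp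
    _ ≤ M * a N / M := by gcongr
    _ = a N := by field_simp

/-- Summing `a` over windows of length `√N` next to `N`: these are long enough for the `O(N ^ q)`
error of the bounds on partial sums to be negligible, and short enough for `N ^ q` to be
essentially constant on them. -/
theorem tendsto_div_pow_of_sum_range_bounds :
    Tendsto (fun N => a N / (N : ℝ) ^ q) atTop (𝓝 (q + 1)) := by
  have hlim := tendsto_one_add_div_natSqrt_mul_pow
  refine tendsto_of_tendsto_of_tendsto_of_le_of_le'
    ?_ ?_ (eventually_le_div_pow hmono hA hlow hup) (eventually_div_pow_le hmono hA hlow hup) <;>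
    simpa only [mul_one] using (hlim _ _ _ q).const_mul ((q : ℝ) + 1)

end QuasiMonotone

section WeightedSum

variable {ι : Type*} {w : ι → ℕ}

def mulAddRemainder (w : ι → ℕ) (p : (ι → ℕ) × (ι → ℕ)) : ι → ℕ :=
  fun i => p.1 i * w i + p.2 i

lemma injOn_mulAddRemainder (hw : ∀ i, 0 < w i) :
    Set.InjOn (mulAddRemainder w) {p | ∀ i, p.2 i < w i} := by
  rintro ⟨c₁, e₁⟩ he₁ ⟨c₂, e₂⟩ he₂ h
  have hi : ∀ i, c₁ i = c₂ i ∧ e₁ i = e₂ i := fun i => by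
    have hdm : ∀ c e, e < w i → (c * w i + e) / w i = c ∧ (c * w i + e) % w i = e :=
      fun c e he => (Nat.div_mod_unique (hw i)).2 ⟨by ring, he⟩
    have h12 : c₁ i * w i + e₁ i = c₂ i * w i + e₂ i := congrFun h i
    obtain ⟨hc₁, he₁'⟩ := hdm _ _ (he₁ i)
    obtain ⟨hc₂, he₂'⟩ := hdm _ _ (he₂ i)
    rw [h12] at hc₁ he₁'
    exact ⟨hc₁.symm.trans hc₂, he₁'.symm.trans he₂'⟩
  simp only [Prod.mk.injEq]
  exact ⟨funext fun i => (hi i).1, funext fun i => (hi i).2⟩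

lemma exists_forall_ge_exists_weightedSum_eq [Fintype ι] (hgcd : univ.gcd w = 1) :
    ∃ K, ∀ k ≥ K, ∃ d : ι → ℕ, ∑ i, d i * w i = k := by
  obtain ⟨K, hK⟩ := Nat.exists_mem_closure_of_ge (Set.range w)
  have hdvd : Nat.setGcd (Set.range w) ∣ 1 :=
    hgcd ▸ Finset.dvd_gcd fun i _ => Nat.setGcd_dvd_of_mem ⟨i, rfl⟩
  refine ⟨K, fun k hk => ?_⟩
  obtain ⟨d, hd⟩ :=
    AddSubmonoid.mem_closure_range_iff_of_fintype.1 (hK k hk (hdvd.trans (one_dvd k)))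
  exact ⟨d, by simp [hd]⟩

variable [Fintype ι] [DecidableEq ι]

/-- The box `c i ≤ m` only makes the set finite: for positive weights it is implied by the
weighted-sum condition (`mem_weightedSumLE`). -/
def weightedSumLE (w : ι → ℕ) (m : ℕ) : Finset (ι → ℕ) :=
  {c ∈ Fintype.piFinset fun _ => range (m + 1) | ∑ i, c i * w i ≤ m}

def weightedSumEq (w : ι → ℕ) (n : ℕ) : Finset (ι → ℕ) :=
  {c ∈ weightedSumLE w n | ∑ i, c i * w i = n}

lemma mem_weightedSumLE (hw : ∀ i, 0 < w i) {c : ι → ℕ} {m : ℕ} :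
    c ∈ weightedSumLE w m ↔ ∑ i, c i * w i ≤ m := by
  refine ⟨fun h => (mem_filter.1 h).2, fun h => mem_filter.2 ⟨?_, h⟩⟩
  refine Fintype.mem_piFinset.2 fun i => mem_range_succ_iff.2 ?_
  calc c i ≤ c i * w i := Nat.le_mul_of_pos_right _ (hw i)
    _ ≤ ∑ j, c j * w j :=
        single_le_sum (f := fun j => c j * w j) (fun _ _ => Nat.zero_le _) (mem_univ i)
    _ ≤ m := h

lemma mem_weightedSumEq (hw : ∀ i, 0 < w i) {c : ι → ℕ} {n : ℕ} :
    c ∈ weightedSumEq w n ↔ ∑ i, c i * w i = n := by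
  rw [weightedSumEq, mem_filter, mem_weightedSumLE hw]
  exact ⟨And.right, fun h => ⟨h.le, h⟩⟩

lemma mem_weightedSumLE_one {b : ι → ℕ} {m : ℕ} :
    b ∈ weightedSumLE (1 : ι → ℕ) m ↔ ∑ i, b i ≤ m := by
  simp [mem_weightedSumLE (w := 1) fun _ => Nat.one_pos]

lemma card_piAntidiag_univ (n : ℕ) :
    #(piAntidiag (univ : Finset ι) n) = (Fintype.card ι + n - 1).choose n := by
  rw [← card_univ, ← card_finsuppAntidiag_nat_eq_choose, finsuppAntidiag, card_map, card_attach]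

lemma card_weightedSumLE_one (m : ℕ) :
    #(weightedSumLE (1 : ι → ℕ) m) = (m + Fintype.card ι).choose (Fintype.card ι) := by
  have hslack :
      #(weightedSumLE (1 : ι → ℕ) m) = #(piAntidiag (univ : Finset (Option ι)) m) := by
    refine card_nbij' (fun b o => o.elim (m - ∑ i, b i) b) (fun f i => f (some i)) ?_ ?_ ?_ ?_
    · intro b hb
      simp only [mem_coe, mem_weightedSumLE_one, mem_piAntidiag] at hb ⊢
      simp [Fintype.sum_option, hb]
    · intro f hf
      simp only [mem_coe, mem_weightedSumLE_one, mem_piAntidiag] at hf ⊢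
      rw [← hf.1, Fintype.sum_option]
      omega
    · intro b _
      rfl
    · intro f hf
      simp only [mem_coe, mem_piAntidiag] at hf
      funext o
      cases o with
      | none => simp [← hf.1, Fintype.sum_option]
      | some i => rfl
  rw [hslack, card_piAntidiag_univ, Fintype.card_option, Nat.add_right_comm, Nat.add_sub_cancel,
    add_comm, Nat.choose_symm_add]

lemma pow_le_factorial_mul_card_weightedSumLE_one (m : ℕ) :
    (m : ℝ) ^ Fintype.card ι ≤
      (Fintype.card ι).factorial * #(weightedSumLE (1 : ι → ℕ) m) := by
  have h := Nat.pow_le_choose (α := ℝ) (Fintype.card ι) (m + Fintype.card ι)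
  rw [div_le_iff₀' (by positivity)] at h
  rw [card_weightedSumLE_one]
  refine le_trans ?_ h
  gcongr
  omega

lemma factorial_mul_card_weightedSumLE_one_le (m : ℕ) :
    (Fintype.card ι).factorial * (#(weightedSumLE (1 : ι → ℕ) m) : ℝ) ≤
      (m + Fintype.card ι) ^ Fintype.card ι := by
  have h := Nat.choose_le_pow_div (α := ℝ) (Fintype.card ι) (m + Fintype.card ι)
  rw [card_weightedSumLE_one, ← le_div_iff₀' (by positivity)]
  exact_mod_cast h

lemma card_weightedSumLE_one_le (hw : ∀ i, 0 < w i) (m : ℕ) :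
    #(weightedSumLE (1 : ι → ℕ) m) ≤ (∏ i, w i) * #(weightedSumLE w m) := by
  have hsub : weightedSumLE (1 : ι → ℕ) m ⊆
      (weightedSumLE w m ×ˢ Fintype.piFinset fun i => range (w i)).image (mulAddRemainder w) := by
    intro b hb
    rw [mem_weightedSumLE_one] at hb
    refine mem_image.2
      ⟨(fun i => b i / w i, fun i => b i % w i), mem_product.2 ⟨?_, ?_⟩, ?_⟩
    · rw [mem_weightedSumLE hw]
      exact (sum_le_sum fun i _ => Nat.div_mul_le_self _ _).trans hb
    · exact Fintype.mem_piFinset.2 fun i => mem_range.2 (Nat.mod_lt _ (hw i))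
    · exact funext fun i => Nat.div_add_mod' _ _
  calc #(weightedSumLE (1 : ι → ℕ) m)
      ≤ #(weightedSumLE w m ×ˢ Fintype.piFinset fun i => range (w i)) :=
        (card_le_card hsub).trans card_image_le
    _ = (∏ i, w i) * #(weightedSumLE w m) := by
        rw [card_product, Fintype.card_piFinset, mul_comm]
        simp

lemma mul_card_weightedSumLE_le (hw : ∀ i, 0 < w i) (m : ℕ) :
    (∏ i, w i) * #(weightedSumLE w m) ≤ #(weightedSumLE (1 : ι → ℕ) (m + ∑ i, w i)) := by
  calc (∏ i, w i) * #(weightedSumLE w m)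
      = #(weightedSumLE w m ×ˢ Fintype.piFinset fun i => range (w i)) := by
        rw [card_product, Fintype.card_piFinset, mul_comm]
        simp
    _ ≤ #(weightedSumLE (1 : ι → ℕ) (m + ∑ i, w i)) := by
        refine card_le_card_of_injOn (mulAddRemainder w) ?_ ?_
        · intro p hp
          simp only [coe_product, Set.mem_prod, mem_coe, mem_weightedSumLE hw, Fintype.coe_piFinset,
            Set.mem_pi, Set.mem_univ, forall_const, coe_range, Set.mem_Iio] at hp
          simp only [mem_coe, mem_weightedSumLE_one, mulAddRemainder, sum_add_distrib]
          exact add_le_add hp.1 (sum_le_sum fun i _ => (hp.2 i).le)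
        · refine (injOn_mulAddRemainder hw).mono fun p hp => ?_
          simp only [coe_product, Set.mem_prod, Fintype.coe_piFinset] at hp
          simpa using hp.2

lemma pow_le_factorial_mul_prod_mul_card_weightedSumLE (hw : ∀ i, 0 < w i) (m : ℕ) :
    (m : ℝ) ^ Fintype.card ι ≤
      (Fintype.card ι).factorial * (∏ i, w i) * #(weightedSumLE w m) := by
  have := card_weightedSumLE_one_le hw m
  calc (m : ℝ) ^ Fintype.card ι
      ≤ (Fintype.card ι).factorial * #(weightedSumLE (1 : ι → ℕ) m) :=
        pow_le_factorial_mul_card_weightedSumLE_one m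
    _ ≤ _ := by rw [mul_assoc]; gcongr; exact_mod_cast this

lemma factorial_mul_prod_mul_card_weightedSumLE_le (hw : ∀ i, 0 < w i) (m : ℕ) :
    (Fintype.card ι).factorial * (∏ i, w i) * (#(weightedSumLE w m) : ℝ) ≤
      (m + (∑ i, w i + Fintype.card ι : ℕ)) ^ Fintype.card ι := by
  have := mul_card_weightedSumLE_le hw m
  calc (Fintype.card ι).factorial * (∏ i, w i) * (#(weightedSumLE w m) : ℝ)
      ≤ (Fintype.card ι).factorial * #(weightedSumLE (1 : ι → ℕ) (m + ∑ i, w i)) := by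
        rw [mul_assoc]; gcongr; exact_mod_cast this
    _ ≤ _ := by
        have := factorial_mul_card_weightedSumLE_one_le (ι := ι) (m + ∑ i, w i)
        push_cast at this ⊢
        rwa [add_assoc] at this

lemma card_weightedSumLE_eq_sum (hw : ∀ i, 0 < w i) (m : ℕ) :
    #(weightedSumLE w m) = ∑ n ∈ range (m + 1), #(weightedSumEq w n) := by
  rw [card_eq_sum_card_fiberwise (f := fun c => ∑ i, c i * w i) (t := range (m + 1))
    fun c hc => mem_range_succ_iff.2 ((mem_weightedSumLE hw (c := c)).1 hc)]
  refine sum_congr rfl fun n hn => congrArg card (ext fun c => ?_)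
  rw [mem_filter, mem_weightedSumLE hw, mem_weightedSumEq hw]
  have := mem_range_succ_iff.1 hn
  constructor
  · exact And.right
  · intro h; exact ⟨h ▸ this, h⟩

lemma card_weightedSumEq_le_add (hw : ∀ i, 0 < w i) (d : ι → ℕ) (n : ℕ) :
    #(weightedSumEq w n) ≤ #(weightedSumEq w (n + ∑ i, d i * w i)) := by
  refine card_le_card_of_injOn (· + d) (fun c hc => ?_) (fun _ _ _ _ h => add_right_cancel h)
  simp only [mem_coe, mem_weightedSumEq hw, Pi.add_apply, add_mul, sum_add_distrib] at hc ⊢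
  rw [hc]

theorem tendsto_card_weightedSumEq_mul_prod_div_pow (hw : ∀ i, 0 < w i)
    (hgcd : univ.gcd w = 1) :
    Tendsto (fun N : ℕ => (#(weightedSumEq w N) : ℝ) * (∏ i, (w i : ℝ)) *
        (Fintype.card ι - 1).factorial / (N : ℝ) ^ (Fintype.card ι - 1)) atTop (𝓝 1) := by
  obtain ⟨q, hq⟩ : ∃ q, Fintype.card ι = q + 1 :=
    Nat.exists_eq_add_one_of_ne_zero fun h => by
      simp [Fintype.card_eq_zero_iff.1 h, univ_eq_empty] at hgcd
  obtain ⟨K, hK⟩ := exists_forall_ge_exists_weightedSum_eq hgcd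
  set a : ℕ → ℝ := fun n => (q + 1).factorial * (∏ i, w i) * #(weightedSumEq w n)
  have hsum : ∀ m, ∑ n ∈ range (m + 1), a n =
      (q + 1).factorial * (∏ i, w i) * #(weightedSumLE w m) := fun m => by
    simp [a, card_weightedSumLE_eq_sum hw, mul_sum]
  have hmono : ∀ n m, n + K ≤ m → a n ≤ a m := fun n m hnm => by
    obtain ⟨d, hd⟩ := hK (m - n) (by omega)
    have := card_weightedSumEq_le_add hw d n
    rw [hd, Nat.add_sub_cancel' (by omega)] at this
    simp only [a]
    gcongr
  have hlim := tendsto_div_pow_of_sum_range_bounds hmono (A := (∑ i, w i + (q + 1) : ℕ))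
    (by positivity)
    (fun m => hsum m ▸ hq ▸ pow_le_factorial_mul_prod_mul_card_weightedSumLE hw m)
    (fun m => hsum m ▸ hq ▸ factorial_mul_prod_mul_card_weightedSumLE_le hw m)
  have h := hlim.div_const ((q : ℝ) + 1)
  rw [div_self (by positivity)] at h
  refine h.congr fun N => ?_
  simp only [a, hq, Nat.add_sub_cancel, Nat.factorial_succ]
  push_cast
  field_simp

end WeightedSum

lemma ncard_eq_card_weightedSumEq {S : Finset ℕ} (hpos : ∀ s ∈ S, 0 < s) (N : ℕ) :
    Set.ncard {c : ℕ → ℕ | (∀ s ∉ S, c s = 0) ∧ ∑ s ∈ S, c s * s = N} =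
      #(weightedSumEq (fun i : S => (i : ℕ)) N) := by
  have hw : ∀ i : S, 0 < (i : ℕ) := fun i => hpos i i.2
  have hext : ∀ d : S → ℕ,
      ∑ s ∈ S, Function.extend Subtype.val d 0 s * s = ∑ i : S, d i * i :=
    fun d => by
      rw [← sum_coe_sort S]
      exact sum_congr rfl fun i _ => by rw [Subtype.val_injective.extend_apply]
  have himage : {c : ℕ → ℕ | (∀ s ∉ S, c s = 0) ∧ ∑ s ∈ S, c s * s = N} =
      (fun d : S → ℕ => Function.extend Subtype.val d 0) ''
        ↑(weightedSumEq (fun i : S => (i : ℕ)) N) := by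
    ext c
    simp only [Set.mem_ofPred_eq, Set.mem_image, mem_coe, mem_weightedSumEq hw]
    constructor
    · rintro ⟨hc0, hcN⟩
      have hc : Function.extend Subtype.val (fun i : S => c i) 0 = c := funext fun n => by
        by_cases hn : n ∈ S
        · exact Subtype.val_injective.extend_apply (fun i : S => c i) 0 ⟨n, hn⟩
        · rw [Function.extend_apply' _ _ _ fun ⟨i, hi⟩ => hn (hi ▸ i.2), hc0 n hn,
            Pi.zero_apply]
      exact ⟨fun i => c i, by rw [← hext, hc, hcN], hc⟩
    · rintro ⟨d, hd, rfl⟩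
      refine ⟨fun s hs => ?_, by rw [hext, hd]⟩
      rw [Function.extend_apply' _ _ _ fun ⟨i, hi⟩ => hs (hi ▸ i.2), Pi.zero_apply]
  rw [himage, Set.ncard_image_of_injective _
    (Function.extend_injective Subtype.val_injective (0 : ℕ → ℕ)),
    Set.ncard_coe_finset]

theorem schur_denumerant_asymptotic (S : Finset ℕ) (hpos : ∀ s ∈ S, 0 < s)
    (hgcd : S.gcd id = 1) :
    Filter.Tendsto (fun N : ℕ =>
      (Set.ncard {c : ℕ → ℕ | (∀ s ∉ S, c s = 0) ∧ ∑ s ∈ S, c s * s = N} : ℝ) *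
          (∏ s ∈ S, (s : ℝ)) * (Nat.factorial (S.card - 1)) / (N : ℝ) ^ (S.card - 1))
      Filter.atTop (nhds 1) := by
  have hgcd' : (univ : Finset S).gcd (↑) = 1 := by
    rwa [← attach_image_val (s := S), gcd_image, ← univ_eq_attach] at hgcd
  have h := tendsto_card_weightedSumEq_mul_prod_div_pow (fun i : S => hpos i i.2) hgcd'
  simp only [Fintype.card_coe, prod_coe_sort S (fun s => (s : ℝ))] at h
  simpa only [ncard_eq_card_weightedSumEq hpos] using h
end

section
/- For n ≥ 3, the limit as N → ∞ of n! · T(N, n) / C(N-1, n-1) equals n! / ∏_{j=2}^{n} (F_{j+2} - 1), where T(N, n) is the number of n-tuples (a_1, …, a_n) of positive integers with a_1 ≥ ⋯ ≥ a_n, ∑ a_i = N, and a_i ≥ a_{i+1} + a_{i+2} for all 1 ≤ i ≤ n-2. -/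
/-!
Writing `c_i = a_i - a_{i+1} - a_{i+2}` (with `a_n = a_{n+1} = 0`) maps the admissible tuples
bijectively onto the vectors `c ∈ ℕⁿ` with `c_{n-1} ≥ 1`; the inverse is
`a_i = ∑_{k ≥ i} c_k F_{k-i+1}`, and it turns `∑ a_i` into `∑_k (F_{k+3} - 1) c_k`.
Since `F_3 - 1 = 1`, the coordinate `c_0` is a slack variable, so `T(N, n)` is the number of
lattice points `d ∈ ℕ^{n-1}` of the simplex `∑_{k<n-1} (F_{k+4} - 1) d_k ≤ M`,
`M = N - (F_{n+2} - 1)`.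
Division with remainder by the weights squeezes this count, times the product of the weights,
between the point counts `C(M + n - 1, n - 1)` and `C(M + s + n - 1, n - 1)`,
`s = ∑_k (F_{k+4} - 2)`, of two unit simplices (stars and bars), and all of these are
asymptotic to `N^{n-1} / (n-1)!`.
-/

open Finset Nat Filter Asymptotics Topology

lemma isEquivalent_choose_add (a r : ℕ) :
    (fun M : ℕ => ((M + a).choose r : ℝ)) ~[atTop] fun M => (M : ℝ) ^ r / r ! := by
  have hshift : (fun M : ℕ => ((M + a : ℕ) : ℝ)) ~[atTop] fun M => (M : ℝ) := by
    refine IsEquivalent.symm ((isEquivalent_iff_tendsto_one ?_).2 ?_)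
    · filter_upwards [eventually_gt_atTop 0] with M hM
      positivity
    · simpa [Pi.div_def] using tendsto_natCast_div_add_atTop (a : ℝ)
  exact ((isEquivalent_choose r).comp_tendsto (tendsto_add_atTop_nat a)).trans
    ((hshift.pow r).div IsEquivalent.refl)

lemma tendsto_choose_add_div_choose_add (a b r : ℕ) :
    Tendsto (fun M : ℕ => ((M + a).choose r : ℝ) / (M + b).choose r) atTop (𝓝 1) := by
  refine (isEquivalent_iff_tendsto_one ?_).1
    ((isEquivalent_choose_add a r).trans (isEquivalent_choose_add b r).symm)
  filter_upwards [eventually_ge_atTop r] with M hM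
  exact_mod_cast (Nat.choose_pos (by omega)).ne'

lemma natCard_sum_eq_choose (r M : ℕ) :
    Nat.card {c : Fin (r + 1) → ℕ // ∑ k, c k = M} = (M + r).choose r := by
  rw [← Nat.card_congr (Sym.equivNatSumOfFintype _ _), Sym.natCard_sym_eq_choose, Nat.card_fin,
    add_right_comm, add_tsub_cancel_right, add_comm M]
  exact Nat.choose_symm_add.symm

section LatticePoints

variable {ι : Type*} [Fintype ι] [DecidableEq ι]

def weightedSimplex (w : ι → ℕ) (M : ℕ) : Finset (ι → ℕ) :=
  {d ∈ Fintype.piFinset fun _ => range (M + 1) | ∑ k, w k * d k ≤ M}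

lemma mem_weightedSimplex {w : ι → ℕ} (hw : ∀ k, 0 < w k) {M : ℕ} {d : ι → ℕ} :
    d ∈ weightedSimplex w M ↔ ∑ k, w k * d k ≤ M := by
  refine ⟨fun h => (mem_filter.1 h).2, fun h => mem_filter.2 ⟨?_, h⟩⟩
  refine Fintype.mem_piFinset.2 fun k => mem_range.2 ?_
  have := (single_le_sum (fun k _ => Nat.zero_le (w k * d k)) (mem_univ k)).trans h
  nlinarith [hw k]

lemma mem_weightedSimplex_one {M : ℕ} {d : ι → ℕ} :
    d ∈ weightedSimplex (1 : ι → ℕ) M ↔ ∑ k, d k ≤ M := by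
  rw [mem_weightedSimplex (w := 1) fun _ => Nat.one_pos]
  simp

lemma card_weightedSimplex_mul_prod (w : ι → ℕ) (M : ℕ) :
    #(weightedSimplex w M) * ∏ k, w k =
      #(weightedSimplex w M ×ˢ Fintype.piFinset fun k => range (w k)) := by
  simp [card_product, Fintype.card_piFinset]

lemma card_weightedSimplex_one_le {w : ι → ℕ} (hw : ∀ k, 0 < w k) (M : ℕ) :
    #(weightedSimplex (1 : ι → ℕ) M) ≤ #(weightedSimplex w M) * ∏ k, w k := by
  rw [card_weightedSimplex_mul_prod]
  refine card_le_card_of_injOn (fun d => (fun k => d k / w k, fun k => d k % w k)) ?_ ?_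
  · intro d hd
    rw [mem_coe, mem_weightedSimplex_one] at hd
    refine mem_product.2 ⟨(mem_weightedSimplex hw).2 ?_,
      Fintype.mem_piFinset.2 fun k => mem_range.2 (Nat.mod_lt _ (hw k))⟩
    exact (sum_le_sum fun k _ => Nat.mul_div_le (d k) (w k)).trans hd
  · intro d _ d' _ h
    simp only [Prod.mk.injEq, funext_iff] at h
    funext k
    rw [← Nat.div_add_mod (d k) (w k), ← Nat.div_add_mod (d' k) (w k), h.1 k, h.2 k]

lemma card_weightedSimplex_mul_prod_le {w : ι → ℕ} (hw : ∀ k, 0 < w k) (M : ℕ) :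
    #(weightedSimplex w M) * ∏ k, w k ≤
      #(weightedSimplex (1 : ι → ℕ) (M + ∑ k, (w k - 1))) := by
  rw [card_weightedSimplex_mul_prod]
  refine card_le_card_of_injOn (fun p => fun k => w k * p.1 k + p.2 k) ?_ ?_
  · rintro ⟨q, ρ⟩ hp
    simp only [coe_product, Set.mem_prod, mem_coe, mem_weightedSimplex hw, Fintype.coe_piFinset,
      Set.mem_pi, Set.mem_univ, mem_range, true_implies] at hp
    rw [mem_coe, mem_weightedSimplex_one, sum_add_distrib]
    dsimp only
    have : ∑ k, ρ k ≤ ∑ k, (w k - 1) := sum_le_sum fun k _ => by have := hp.2 k; omega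
    omega
  · rintro ⟨q, ρ⟩ hp ⟨q', ρ'⟩ hp' h
    simp only [coe_product, Set.mem_prod, Fintype.coe_piFinset, Set.mem_pi, Set.mem_univ,
      mem_coe, mem_range, true_implies] at hp hp'
    simp only [funext_iff] at h
    have hq : ∀ k, q k = q' k := fun k => by
      rw [← add_zero (q k), ← Nat.div_eq_of_lt (hp.2 k), ← Nat.mul_add_div (hw k), h k,
        Nat.mul_add_div (hw k), Nat.div_eq_of_lt (hp'.2 k), add_zero]
    refine Prod.ext (funext hq) (funext fun k => ?_)
    have := h k
    rw [hq k] at this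
    dsimp only
    omega

lemma ncard_one_le_and_sum_mul_eq (W : ι → ℕ) (j : ι) {N : ℕ} (hN : W j ≤ N) :
    {c : ι → ℕ | 1 ≤ c j ∧ ∑ k, W k * c k = N}.ncard =
      {c : ι → ℕ | ∑ k, W k * c k = N - W j}.ncard := by
  have hsum (c : ι → ℕ) :
      ∑ k, W k * (c + Pi.single j 1 : ι → ℕ) k = ∑ k, W k * c k + W j := by
    simp [mul_add, sum_add_distrib, Pi.single_apply]
  refine (congrArg Set.ncard ?_).trans
    (Set.ncard_image_of_injective _ (add_left_injective (Pi.single j 1)))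
  ext c
  simp only [Set.mem_ofPred_eq, Set.mem_image]
  constructor
  · rintro ⟨hc, rfl⟩
    have hc' : c - Pi.single j 1 + Pi.single j 1 = c := by
      ext k
      by_cases hk : k = j
      · subst hk; simp; omega
      · simp [hk]
    refine ⟨c - Pi.single j 1, ?_, hc'⟩
    have := hsum (c - Pi.single j 1)
    rw [hc'] at this
    omega
  · rintro ⟨c, hc, rfl⟩
    refine ⟨by simp, ?_⟩
    rw [hsum]
    omega

end LatticePoints

lemma ncard_sum_mul_eq_card_weightedSimplex {r : ℕ} {W : Fin (r + 1) → ℕ} (hW0 : W 0 = 1)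
    (hW : ∀ k, 0 < W k) (M : ℕ) :
    {c : Fin (r + 1) → ℕ | ∑ k, W k * c k = M}.ncard =
      #(weightedSimplex (fun k : Fin r => W k.succ) M) := by
  have hinj : Function.Injective
      fun d : Fin r → ℕ => (Fin.cons (M - ∑ k, W k.succ * d k) d : Fin (r + 1) → ℕ) :=
    fun d d' h => by simpa using congrArg Fin.tail h
  rw [← Set.ncard_coe_finset, ← Set.ncard_image_of_injective _ hinj]
  congr 1
  ext c
  simp only [Set.mem_ofPred_eq, Set.mem_image, mem_coe,
    mem_weightedSimplex fun k : Fin r => hW k.succ, Fin.sum_univ_succ, hW0, one_mul]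
  constructor
  · rintro hc
    refine ⟨Fin.tail c, by simp only [Fin.tail]; omega, ?_⟩
    rw [← Fin.cons_self_tail c]
    simp only [Fin.tail, Fin.cons_succ]
    congr 1
    omega
  · rintro ⟨d, hd, rfl⟩
    simp only [Fin.cons_zero, Fin.cons_succ]
    omega

lemma card_weightedSimplex_one (r M : ℕ) :
    #(weightedSimplex (1 : Fin r → ℕ) M) = (M + r).choose r := by
  have h := ncard_sum_mul_eq_card_weightedSimplex (W := (1 : Fin (r + 1) → ℕ)) rfl
    (fun _ => Nat.one_pos) M
  simp only [Pi.one_apply, one_mul] at h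
  rw [← natCard_sum_eq_choose]
  exact h.symm.trans (Nat.card_coe_set_eq _).symm

lemma tendsto_card_weightedSimplex_div_choose {r : ℕ} {w : Fin r → ℕ} (hw : ∀ k, 0 < w k)
    (a : ℕ) :
    Tendsto (fun M => (#(weightedSimplex w M) : ℝ) / (M + a).choose r) atTop
      (𝓝 (∏ k, (w k : ℝ))⁻¹) := by
  have hW : (0 : ℝ) < ∏ k, (w k : ℝ) := prod_pos fun k _ => by exact_mod_cast hw k
  have hlim (b : ℕ) :
      Tendsto (fun M => ((M + b).choose r : ℝ) / (M + a).choose r / ∏ k, (w k : ℝ)) atTop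
        (𝓝 (∏ k, (w k : ℝ))⁻¹) := by
    simpa using (tendsto_choose_add_div_choose_add b a r).div_const (∏ k, (w k : ℝ))
  refine tendsto_of_tendsto_of_tendsto_of_le_of_le (hlim r) (hlim (∑ k, (w k - 1) + r))
    (fun M => ?_) (fun M => ?_)
  · rw [div_right_comm]
    refine div_le_div_of_nonneg_right ?_ (Nat.cast_nonneg _)
    rw [div_le_iff₀ hW, ← card_weightedSimplex_one]
    exact_mod_cast card_weightedSimplex_one_le hw M
  · rw [div_right_comm]
    refine div_le_div_of_nonneg_right ?_ (Nat.cast_nonneg _)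
    rw [le_div_iff₀ hW, ← add_assoc, ← card_weightedSimplex_one]
    exact_mod_cast card_weightedSimplex_mul_prod_le hw M

section FibonacciCoordinates

variable {n : ℕ}

def zeroExtend (a : Fin n → ℕ) (i : ℕ) : ℕ := if h : i < n then a ⟨i, h⟩ else 0

lemma zeroExtend_of_lt (a : Fin n → ℕ) {i : ℕ} (h : i < n) : zeroExtend a i = a ⟨i, h⟩ :=
  dif_pos h

lemma zeroExtend_of_le (a : Fin n → ℕ) {i : ℕ} (h : n ≤ i) : zeroExtend a i = 0 :=
  dif_neg (by omega)

lemma zeroExtend_eq_sum (a : Fin n → ℕ) (i : ℕ) :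
    zeroExtend a i = ∑ k : Fin n, if (k : ℕ) = i then a k else 0 := by
  by_cases h : i < n
  · simp_rw [zeroExtend, dif_pos h, ← Fin.ext_iff (b := ⟨i, h⟩), sum_ite_eq', mem_univ,
      if_true]
  · rw [zeroExtend_of_le a (by omega)]
    exact (sum_eq_zero fun k _ => if_neg (by omega)).symm

def fibSum (c : Fin n → ℕ) (i : ℕ) : ℕ :=
  ∑ k : Fin n, if i ≤ k then c k * fib (k + 1 - i) else 0

lemma fibSum_of_le (c : Fin n → ℕ) {i : ℕ} (h : n ≤ i) : fibSum c i = 0 :=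
  sum_eq_zero fun k _ => if_neg (by omega)

lemma fibSum_eq (c : Fin n → ℕ) (i : ℕ) :
    fibSum c i = zeroExtend c i + fibSum c (i + 1) + fibSum c (i + 2) := by
  rw [zeroExtend_eq_sum, fibSum, fibSum, fibSum, ← sum_add_distrib, ← sum_add_distrib]
  refine sum_congr rfl fun k _ => ?_
  generalize (k : ℕ) = m
  rcases Nat.lt_or_ge m i with h | h
  · simp [show ¬ i ≤ m by omega, show m ≠ i by omega, show ¬ i + 1 ≤ m by omega,
      show ¬ i + 2 ≤ m by omega]
  obtain ⟨d, rfl⟩ := exists_add_of_le h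
  rcases d with _ | _ | d
  · simp
  · simp [show i + (0 + 1) + 1 - i = 2 by omega]
  · simp only [show i + (d + 2) + 1 - i = d + 3 by omega,
      show i + (d + 2) + 1 - (i + 1) = d + 2 by omega,
      show i + (d + 2) + 1 - (i + 2) = d + 1 by omega, fib_add_two]
    simp
    ring

lemma fibSum_add_le (c : Fin n → ℕ) (i : ℕ) :
    fibSum c (i + 1) + fibSum c (i + 2) ≤ fibSum c i := by
  have := fibSum_eq c i
  omega

lemma fibSum_antitone (c : Fin n → ℕ) : Antitone (fibSum c) :=
  antitone_nat_of_succ_le fun i => by have := fibSum_eq c i; omega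

lemma sum_fibSum (c : Fin n → ℕ) :
    ∑ i : Fin n, fibSum c i = ∑ k : Fin n, (fib (k + 3) - 1) * c k := by
  simp only [fibSum]
  rw [sum_comm]
  refine sum_congr rfl fun k _ => ?_
  rw [Fin.sum_univ_eq_sum_range (fun i => if i ≤ k then c k * fib (k + 1 - i) else 0),
    ← sum_filter, show (range n).filter (· ≤ (k : ℕ)) = range (k + 1) by ext; simp; omega,
    ← mul_sum, mul_comm]
  have hreflect := sum_range_reflect (fun i => fib (i + 1)) (k + 1)
  have hfib := fib_succ_eq_succ_sum (k + 2)
  rw [sum_range_succ', fib_zero, add_zero] at hfib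
  simp only [add_tsub_cancel_right] at hreflect
  rw [sum_congr rfl fun i hi => by rw [show (k : ℕ) + 1 - i = k - i + 1 by simp at hi; omega],
    hreflect, hfib]
  rfl

lemma zeroExtend_fibSum (c : Fin n → ℕ) :
    zeroExtend (fun i : Fin n => fibSum c i) = fibSum c := by
  funext i
  by_cases h : i < n
  · exact zeroExtend_of_lt _ h
  · rw [zeroExtend_of_le _ (by omega), fibSum_of_le c (by omega)]

def fibDiff (a : Fin n → ℕ) : Fin n → ℕ :=
  fun i => a i - zeroExtend a (i + 1) - zeroExtend a (i + 2)

lemma fibDiff_fibSum (c : Fin n → ℕ) : fibDiff (fun i : Fin n => fibSum c i) = c := by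
  funext i
  have := fibSum_eq c i
  rw [zeroExtend_of_lt c i.2, Fin.eta] at this
  simp only [fibDiff, zeroExtend_fibSum]
  omega

lemma fibSum_fibDiff {a : Fin n → ℕ}
    (ha : ∀ i, zeroExtend a (i + 1) + zeroExtend a (i + 2) ≤ zeroExtend a i) :
    fibSum (fibDiff a) = zeroExtend a := by
  funext i
  induction hd : n - i using Nat.strong_induction_on generalizing i with
  | _ d ih =>
    by_cases hi : i < n
    · rw [fibSum_eq, ih (n - (i + 1)) (by omega) (i + 1) rfl,
        ih (n - (i + 2)) (by omega) (i + 2) rfl, zeroExtend_of_lt _ hi, zeroExtend_of_lt _ hi]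
      have := ha i
      rw [zeroExtend_of_lt _ hi] at this
      simp only [fibDiff]
      omega
    · rw [fibSum_of_le _ (by omega), zeroExtend_of_le _ (by omega)]

end FibonacciCoordinates

def triangleFreePartitions (n N : ℕ) : Set (Fin n → ℕ) :=
  {a | (∀ i, 1 ≤ a i) ∧ (∀ i j : Fin n, i ≤ j → a j ≤ a i) ∧ (∑ i, a i) = N ∧
    ∀ i : ℕ, ∀ h : i + 2 < n, a ⟨i + 1, Nat.lt_of_succ_lt h⟩ + a ⟨i + 2, h⟩ ≤
      a ⟨i, Nat.lt_of_le_of_lt (le_add_right i 2) h⟩}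

lemma zeroExtend_add_le_of_mem {n N : ℕ} {a : Fin n → ℕ}
    (ha : a ∈ triangleFreePartitions n N) (i : ℕ) :
    zeroExtend a (i + 1) + zeroExtend a (i + 2) ≤ zeroExtend a i := by
  obtain ⟨-, hmono, -, htri⟩ := ha
  by_cases h2 : i + 2 < n
  · rw [zeroExtend_of_lt _ h2, zeroExtend_of_lt _ (by omega), zeroExtend_of_lt _ (by omega)]
    exact htri i h2
  rw [zeroExtend_of_le a (by omega : n ≤ i + 2)]
  by_cases h1 : i + 1 < n
  · rw [zeroExtend_of_lt _ h1, zeroExtend_of_lt _ (by omega)]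
    exact hmono _ _ (Fin.mk_le_mk.2 (by omega))
  · rw [zeroExtend_of_le a (by omega : n ≤ i + 1)]
    exact Nat.zero_le _

lemma ncard_triangleFreePartitions (r N : ℕ) :
    (triangleFreePartitions (r + 1) N).ncard =
      {c : Fin (r + 1) → ℕ |
        1 ≤ c (Fin.last r) ∧ ∑ k : Fin (r + 1), (fib (k + 3) - 1) * c k = N}.ncard := by
  have hinj : Function.Injective fun c : Fin (r + 1) → ℕ => fun i : Fin (r + 1) => fibSum c i :=
    Function.LeftInverse.injective fibDiff_fibSum
  refine (congrArg Set.ncard ?_).trans (Set.ncard_image_of_injective _ hinj)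
  ext a
  constructor
  · intro ha
    have hfix := fibSum_fibDiff (zeroExtend_add_le_of_mem ha)
    have ha' : (fun i : Fin (r + 1) => fibSum (fibDiff a) i) = a := by
      funext i
      rw [hfix, zeroExtend_of_lt _ i.2]
    refine ⟨fibDiff a, ⟨?_, ?_⟩, ha'⟩
    · simpa [fibDiff, zeroExtend_of_le] using ha.1 (Fin.last r)
    · rw [← sum_fibSum, ha']
      exact ha.2.2.1
  · rintro ⟨c, ⟨hlast, hsum⟩, rfl⟩
    refine ⟨fun i => ?_, fun i j hij => fibSum_antitone c hij, (sum_fibSum c).trans hsum,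
      fun i _ => fibSum_add_le c i⟩
    have hr : fibSum c r = c (Fin.last r) := by
      simpa [fibSum_of_le, zeroExtend_of_lt, Fin.last] using fibSum_eq c r
    exact hlast.trans (hr ▸ fibSum_antitone c (Nat.le_of_lt_succ i.2))

lemma fib_add_three_sub_one_pos (m : ℕ) : 0 < fib (m + 3) - 1 := by
  have : fib 3 ≤ fib (m + 3) := fib_mono (by omega)
  have : fib 3 = 2 := rfl
  omega

lemma ncard_triangleFreePartitions_eq_card_weightedSimplex (r : ℕ) {N : ℕ}
    (hN : fib (r + 3) - 1 ≤ N) :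
    (triangleFreePartitions (r + 1) N).ncard =
      #(weightedSimplex (fun k : Fin r => fib (k + 4) - 1) (N - (fib (r + 3) - 1))) := by
  rw [ncard_triangleFreePartitions, ncard_one_le_and_sum_mul_eq _ _ (by simpa using hN),
    ncard_sum_mul_eq_card_weightedSimplex rfl fun k => fib_add_three_sub_one_pos k]
  simp

theorem prob_no_triangle_n_pieces (n : ℕ) (hn : 3 ≤ n) :
    Filter.Tendsto (fun N : ℕ =>
      (Nat.factorial n : ℝ) * (Set.ncard {a : Fin n → ℕ | (∀ i, 1 ≤ a i) ∧
          (∀ i j : Fin n, i ≤ j → a j ≤ a i) ∧ (∑ i, a i) = N ∧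
          ∀ i : ℕ, ∀ h : i + 2 < n,
            a ⟨i + 1, by omega⟩ + a ⟨i + 2, by omega⟩ ≤ a ⟨i, by omega⟩} : ℕ) /
        (Nat.choose (N - 1) (n - 1) : ℝ))
      Filter.atTop
      (nhds ((Nat.factorial n : ℝ) / ∏ j ∈ Finset.Icc 2 n, ((Nat.fib (j + 2) : ℝ) - 1))) := by
  obtain ⟨r, rfl⟩ : ∃ r, n = r + 1 := ⟨n - 1, by omega⟩
  set w : Fin r → ℕ := fun k => fib (k + 4) - 1
  set v := fib (r + 3) - 1
  have hw : ∀ k, 0 < w k := fun k => fib_add_three_sub_one_pos (k + 1)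
  have hv : 0 < v := fib_add_three_sub_one_pos r
  have hprod : ∏ j ∈ Icc 2 (r + 1), ((fib (j + 2) : ℝ) - 1) = ∏ k, (w k : ℝ) := by
    rw [← Ico_add_one_right_eq_Icc, prod_Ico_eq_prod_range, show r + 1 + 1 - 2 = r by omega,
      Fin.prod_univ_eq_prod_range (fun k => ((fib (k + 4) - 1 : ℕ) : ℝ))]
    refine prod_congr rfl fun k _ => ?_
    rw [Nat.cast_sub (fib_pos.2 (by omega)), add_comm 2 k]
    norm_num
  have hlim := ((tendsto_card_weightedSimplex_div_choose hw (v - 1)).const_mul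
    ((r + 1)! : ℝ)).comp (tendsto_sub_atTop_nat v)
  rw [hprod, div_eq_mul_inv]
  refine hlim.congr' ?_
  filter_upwards [eventually_ge_atTop v] with N hN
  show (r + 1)! * ((#(weightedSimplex w (N - v)) : ℝ) / ((N - v + (v - 1)).choose r)) =
    (r + 1)! * ((triangleFreePartitions (r + 1) N).ncard : ℝ) / ((N - 1).choose (r + 1 - 1))
  rw [ncard_triangleFreePartitions_eq_card_weightedSimplex r hN,
    show N - v + (v - 1) = N - 1 by omega, add_tsub_cancel_right, mul_div_assoc]
end

section
/- Given positive reals x_1, …, x_n sorted decreasingly, no k of them form a (non-degenerate) k-gon if and only if for every i with 1 ≤ i ≤ n-k+1, x_i ≥ x_{i+1} + ⋯ + x_{i+k-1}. -/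
open Finset in
private lemma sum_attachFin_eq {n : ℕ} (x : Fin n → ℝ) (t : Finset ℕ)
    (h : ∀ m ∈ t, m < n) :
    ∑ i ∈ t.attachFin h, x i = ∑ j ∈ t.attach, x ⟨j.1, h j.1 j.2⟩ := by
  rw [← Finset.sum_attach (t.attachFin h) x]
  apply Finset.sum_nbij' (fun a => (⟨a.1.1, (Finset.mem_attachFin h).1 a.2⟩ : {m // m ∈ t}))
    (fun a => (⟨⟨a.1, h a.1 a.2⟩, (Finset.mem_attachFin h).2 a.2⟩ : {i // i ∈ t.attachFin h}))
  · intros; simp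
  · intros; simp
  · intros; simp
  · intros; simp
  · intros; rfl

open Finset in
private lemma aux_sum {n : ℕ} (x : Fin n → ℝ)
    (hsort : ∀ i j : Fin n, i ≤ j → x j ≤ x i) :
    ∀ m a (t : Finset (Fin n)), t.card = m → (∀ i ∈ t, a ≤ i.1) → ∀ hle : a + m ≤ n,
      ∑ i ∈ t, x i ≤ ∑ j ∈ ((Finset.Ico a (a + m)).attachFin
        (fun q hq => by rw [Finset.mem_Ico] at hq; omega)), x j := by
  intro m
  induction m with
  | zero =>
    intro a t hc _ _
    rw [Finset.card_eq_zero.1 hc, Finset.sum_empty]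
    exact le_of_eq (Finset.sum_eq_zero (fun i hi =>
      absurd ((Finset.mem_attachFin _).1 hi) (by simp))).symm
  | succ m ih =>
    intro a t hc hge hle
    have hne : t.Nonempty := Finset.card_pos.1 (by omega)
    set i0 := t.min' hne with hi0
    have hi0m : i0 ∈ t := t.min'_mem hne
    have ha : a ≤ i0.1 := hge _ hi0m
    have hsplit : ∑ i ∈ t, x i = x i0 + ∑ i ∈ t.erase i0, x i :=
      (Finset.add_sum_erase t x hi0m).symm
    have hcard' : (t.erase i0).card = m := by
      rw [Finset.card_erase_of_mem hi0m, hc]; omega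
    have hge' : ∀ i ∈ t.erase i0, a + 1 ≤ i.1 := by
      intro i hi
      have h1 : i0 ≤ i := t.min'_le i (Finset.mem_of_mem_erase hi)
      have h2 : i ≠ i0 := Finset.ne_of_mem_erase hi
      have : i0.1 < i.1 := lt_of_le_of_ne h1 (by
        intro h; exact h2 (Fin.ext h.symm))
      omega
    have hih := ih (a + 1) (t.erase i0) hcard' hge' (by omega)
    have han : a < n := by omega
    have hxa : x i0 ≤ x ⟨a, han⟩ := hsort ⟨a, han⟩ i0 ha
    have hIco : ((Finset.Ico a (a + (m + 1))).attachFin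
        (fun q hq => by rw [Finset.mem_Ico] at hq; omega) : Finset (Fin n))
        = insert ⟨a, han⟩ ((Finset.Ico (a + 1) (a + 1 + m)).attachFin
          (fun q hq => by rw [Finset.mem_Ico] at hq; omega)) := by
      ext b
      simp only [Finset.mem_attachFin, Finset.mem_Ico, Finset.mem_insert]
      constructor
      · rintro ⟨h1, h2⟩
        rcases eq_or_lt_of_le h1 with h | h
        · left; exact Fin.ext h.symm
        · right; omega
      · rintro (rfl | ⟨h1, h2⟩)
        · exact ⟨le_rfl, by show a < a + (m + 1); omega⟩
        · omega
    rw [hIco, Finset.sum_insert (by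
      simp only [Finset.mem_attachFin, Finset.mem_Ico, not_and]
      intro hcon; simp at hcon)]
    rw [hsplit]
    exact add_le_add hxa hih

theorem no_kgon_iff_consecutive_windows (n k : ℕ) (hk : 3 ≤ k) (hkn : k ≤ n)
    (x : Fin n → ℝ) (hpos : ∀ i, 0 < x i) (hsort : ∀ i j : Fin n, i ≤ j → x j ≤ x i) :
    (∀ s : Finset (Fin n), s.card = k → ∃ j ∈ s, ∑ i ∈ s.erase j, x i ≤ x j) ↔
      ∀ i : ℕ, ∀ h : i + k ≤ n,
        (∑ j ∈ (Finset.Ico (i + 1) (i + k)).attach,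
            x ⟨j.1, by have hj := j.2; rw [Finset.mem_Ico] at hj; omega⟩) ≤
          x ⟨i, by omega⟩ := by
  constructor
  · intro H i hi
    have hin : i < n := by omega
    set s : Finset (Fin n) := (Finset.Ico i (i + k)).attachFin
      (fun q hq => by rw [Finset.mem_Ico] at hq; omega) with hs
    have hcard : s.card = k := by
      rw [hs, Finset.card_attachFin, Nat.card_Ico]; omega
    obtain ⟨j, hjs, hj⟩ := H s hcard
    set i0 : Fin n := ⟨i, hin⟩ with hi0def
    have hval : i0.1 = i := rfl
    have hi0 : i0 ∈ s := by
      rw [hs, Finset.mem_attachFin, Finset.mem_Ico]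
      omega
    have hij : i0 ≤ j := by
      have := (Finset.mem_attachFin _).1 (hs ▸ hjs)
      rw [Finset.mem_Ico] at this
      exact this.1
    have hxij : x j ≤ x i0 := hsort _ _ hij
    have key : ∑ a ∈ s.erase i0, x a ≤ x i0 := by
      have e1 : x j + ∑ a ∈ s.erase j, x a = ∑ a ∈ s, x a :=
        Finset.add_sum_erase s x hjs
      have e2 : x i0 + ∑ a ∈ s.erase i0, x a = ∑ a ∈ s, x a :=
        Finset.add_sum_erase s x hi0
      linarith
    have herase : s.erase i0 = (Finset.Ico (i + 1) (i + k)).attachFin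
        (fun q hq => by rw [Finset.mem_Ico] at hq; omega) := by
      ext b
      simp only [Finset.mem_erase, hs, Finset.mem_attachFin, Finset.mem_Ico]
      constructor
      · rintro ⟨h1, h2, h3⟩
        have : b.1 ≠ i := fun h => h1 (Fin.ext h)
        omega
      · rintro ⟨h1, h2⟩
        refine ⟨fun h => ?_, by omega, h2⟩
        rw [Fin.ext_iff] at h
        omega
    rw [herase, sum_attachFin_eq] at key
    exact key
  · intro H s hcard
    have hne : s.Nonempty := Finset.card_pos.1 (by omega)
    set j0 := s.min' hne with hj0
    have hj0m : j0 ∈ s := s.min'_mem hne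
    refine ⟨j0, hj0m, ?_⟩
    have hsub : s ⊆ (Finset.Ico j0.1 n).attachFin
        (fun q hq => by rw [Finset.mem_Ico] at hq; omega) := by
      intro b hb
      simp only [Finset.mem_attachFin, Finset.mem_Ico]
      exact ⟨s.min'_le b hb, b.2⟩
    have hkle : j0.1 + k ≤ n := by
      have := Finset.card_le_card hsub
      rw [hcard, Finset.card_attachFin, Nat.card_Ico] at this
      omega
    have hge : ∀ i ∈ s.erase j0, j0.1 + 1 ≤ i.1 := by
      intro i hi
      have h1 : j0 ≤ i := s.min'_le i (Finset.mem_of_mem_erase hi)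
      have h2 : i ≠ j0 := Finset.ne_of_mem_erase hi
      have : j0.1 < i.1 := lt_of_le_of_ne h1 (fun h => h2 (Fin.ext h.symm))
      omega
    have hcard' : (s.erase j0).card = k - 1 := by
      rw [Finset.card_erase_of_mem hj0m, hcard]
    have haux := aux_sum x hsort (k - 1) (j0.1 + 1) (s.erase j0) hcard' hge (by omega)
    have hset : ((Finset.Ico (j0.1 + 1) (j0.1 + 1 + (k - 1))).attachFin
        (fun q hq => by rw [Finset.mem_Ico] at hq; omega) : Finset (Fin n))
        = (Finset.Ico (j0.1 + 1) (j0.1 + k)).attachFin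
          (fun q hq => by rw [Finset.mem_Ico] at hq; omega) := by
      ext b
      simp only [Finset.mem_attachFin, Finset.mem_Ico]
      omega
    rw [hset, sum_attachFin_eq] at haux
    have hH := H j0.1 hkle
    have hx : x (⟨j0.1, by omega⟩ : Fin n) = x j0 := by congr 1
    rw [hx] at hH
    exact le_trans haux hH
end
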